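/- For indices i, j with j ≤ i, the real function f(t) = ℓ(μ, B(t), ν), where B(t) is B with its (i,j)-entry replaced by t, is twice differentiable at t = B_{ij} and its second derivative equals −𝟙_{i=j}/B_{ii}² − (ν + D)·r_j²·((ν + q) − 2·z_i²)/(ν + q)², where 𝟙_{i=j} is 1 if i = j and 0 otherwise, z_i = (B·r)_i and r_j = y_j − μ_j. -/

import Mathlib

/-!
Along the entry `(i, j)` one has `B(t) r = B r + (t - B i j) r_j eᵢ`, so `1 + q(t)/ν` is a
quadratic polynomial `p` in `t`, positive because `q(t)` is a sum of squares. Since `j ≤ i`, `B(t)`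
stays lower triangular, so `det B(t)` is `t · ∏_{k ≠ i} B k k` when `i = j` and `det B` otherwise.
The second derivative is therefore that of `log t` (or `0`) minus `(ν + D)/2` times that of
`log p`, which at the base point is `(p'' p - p'²)/p²`.
-/

open Matrix

/-- Multivariate t log-likelihood in the Cholesky precision parametrization `Ω = Bᵀ B`:
`ℓ(μ, B, ν) = log Γ((ν+D)/2) - log Γ(ν/2) - (D/2)·log ν - (D/2)·log π + log(det B)
  - ((ν+D)/2)·log(1 + q/ν)` with `q = ‖B(y-μ)‖²`. -/
noncomputable def tCholLL (D : ℕ) (y μ : Fin D → ℝ)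
    (B : Matrix (Fin D) (Fin D) ℝ) (ν : ℝ) : ℝ :=
  Real.log (Real.Gamma ((ν + D) / 2)) - Real.log (Real.Gamma (ν / 2))
    - ((D : ℝ) / 2) * Real.log ν - ((D : ℝ) / 2) * Real.log Real.pi
    + Real.log B.det
    - ((ν + D) / 2) * Real.log (1 + (∑ k, (B.mulVec (y - μ) k) ^ 2) / ν)

/-- The matrix `B` with its `(i,j)`-entry replaced by `t`. -/
def updEntry {D : ℕ} (B : Matrix (Fin D) (Fin D) ℝ) (i j : Fin D) (t : ℝ) :
    Matrix (Fin D) (Fin D) ℝ :=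
  Matrix.of fun k l => if k = i ∧ l = j then t else B k l

open Filter Topology

section Quadratic

variable {a b c d : ℝ}

theorem hasDerivAt_quadratic (t : ℝ) :
    HasDerivAt (fun t => a + c * (t - b) + d * (t - b) ^ 2) (c + 2 * d * (t - b)) t := by
  have hu : HasDerivAt (fun t : ℝ => t - b) 1 t := (hasDerivAt_id t).sub_const b
  refine (((hu.const_mul c).const_add a).add ((hu.pow 2).const_mul d)).congr_deriv ?_
  push_cast
  ring

theorem hasDerivAt_logDeriv_quadratic (ha : a ≠ 0) :
    HasDerivAt (fun t => (c + 2 * d * (t - b)) / (a + c * (t - b) + d * (t - b) ^ 2))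
      ((2 * d * a - c ^ 2) / a ^ 2) b := by
  have hlin : HasDerivAt (fun t => c + 2 * d * (t - b)) (2 * d) b := by
    simpa using (((hasDerivAt_id b).sub_const b).const_mul (2 * d)).const_add c
  refine (hlin.div (hasDerivAt_quadratic b) (by simpa using ha)).congr_deriv ?_
  simp only [sub_self, mul_zero, add_zero, zero_pow two_ne_zero]
  ring

end Quadratic

theorem eventually_differentiableAt_and_hasDerivAt_deriv {f f' : ℝ → ℝ} {x f'' : ℝ}
    (hf : ∀ᶠ t in 𝓝 x, HasDerivAt f (f' t) t) (hf' : HasDerivAt f' f'' x) :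
    (∀ᶠ t in 𝓝 x, DifferentiableAt ℝ f t) ∧ HasDerivAt (deriv f) f'' x :=
  ⟨hf.mono fun _ h => h.differentiableAt, hf'.congr_of_eventuallyEq (hf.mono fun _ h => h.deriv)⟩

namespace updEntry

variable {D : ℕ} (B : Matrix (Fin D) (Fin D) ℝ) (i j : Fin D) (t : ℝ)

theorem eq_add_single : updEntry B i j t = B + Matrix.single i j (t - B i j) := by
  ext k l
  by_cases h : k = i ∧ l = j
  · obtain ⟨rfl, rfl⟩ := h
    simp [updEntry]
  · have h' : ¬(i = k ∧ j = l) := fun h' => h ⟨h'.1.symm, h'.2.symm⟩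
    simp [updEntry, h, h']

theorem mulVec (v : Fin D → ℝ) :
    updEntry B i j t *ᵥ v = B *ᵥ v + Pi.single i ((t - B i j) * v j) := by
  rw [eq_add_single, add_mulVec, single_mulVec, Pi.single]

theorem sum_sq_mulVec (v : Fin D → ℝ) :
    ∑ k, (updEntry B i j t *ᵥ v) k ^ 2 = ∑ k, (B *ᵥ v) k ^ 2
      + 2 * (B *ᵥ v) i * v j * (t - B i j) + v j ^ 2 * (t - B i j) ^ 2 := by
  simp only [mulVec, Pi.add_apply, add_sq, Finset.sum_add_distrib]
  simp only [Pi.single_apply, mul_ite, mul_zero, Finset.sum_ite_eq', Finset.mem_univ,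
    if_true, ite_pow, ne_eq, OfNat.ofNat_ne_zero, not_false_eq_true, zero_pow]
  ring

theorem isLowerTriangular (hB : B.IsLowerTriangular) (hji : j ≤ i) :
    (updEntry B i j t).IsLowerTriangular := by
  intro k l hkl
  simp only [updEntry, of_apply]
  rw [if_neg, hB hkl]
  rintro ⟨rfl, rfl⟩
  exact not_lt.2 hji hkl

theorem det_of_lt (hB : B.IsLowerTriangular) (hji : j < i) :
    (updEntry B i j t).det = B.det := by
  rw [det_of_isLowerTriangular _ (isLowerTriangular B i j t hB hji.le),
    det_of_isLowerTriangular _ hB]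
  refine Finset.prod_congr rfl fun k _ => ?_
  simp only [updEntry, of_apply]
  rw [if_neg fun h => hji.ne (h.2.symm.trans h.1)]

theorem det_self (hB : B.IsLowerTriangular) :
    (updEntry B i i t).det = t * ∏ k ∈ Finset.univ.erase i, B k k := by
  rw [det_of_isLowerTriangular _ (isLowerTriangular B i i t hB le_rfl),
    ← Finset.mul_prod_erase _ _ (Finset.mem_univ i)]
  congr 1
  · simp [updEntry]
  · refine Finset.prod_congr rfl fun k hk => ?_
    simp [updEntry, Finset.ne_of_mem_erase hk]

end updEntry

theorem updEntry.hasDerivAt_log_det {D : ℕ} {B : Matrix (Fin D) (Fin D) ℝ} {i j : Fin D}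
    (hB : B.IsLowerTriangular) (hdiag : ∀ k, B k k ≠ 0) (hji : j ≤ i) :
    (∀ᶠ t in 𝓝 (B i j),
        HasDerivAt (fun t => Real.log (updEntry B i j t).det) (if i = j then t⁻¹ else 0) t) ∧
      HasDerivAt (fun t : ℝ => if i = j then t⁻¹ else 0)
        (-(if i = j then (B i i ^ 2)⁻¹ else 0)) (B i j) := by
  rcases hji.lt_or_eq with hji | rfl
  · simp only [det_of_lt B i j _ hB hji, hji.ne', if_false, neg_zero]
    exact ⟨.of_forall fun t => hasDerivAt_const t _, hasDerivAt_const _ _⟩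
  · simp only [det_self B j _ hB, if_true]
    refine ⟨?_, hasDerivAt_inv (hdiag j)⟩
    have hP : ∏ k ∈ Finset.univ.erase j, B k k ≠ 0 := Finset.prod_ne_zero_iff.2 fun k _ => hdiag k
    filter_upwards [eventually_ne_nhds (hdiag j)] with t ht
    convert (hasDerivAt_mul_const _).log (mul_ne_zero ht hP) using 1
    field_simp

theorem tChol_deriv2_B_general (D : ℕ) (y μ : Fin D → ℝ) (ν : ℝ) (hν : 0 < ν)
    (B : Matrix (Fin D) (Fin D) ℝ)
    (hLT : ∀ k l : Fin D, k < l → B k l = 0)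
    (hdiag : ∀ k, 0 < B k k) (i j : Fin D) (hji : j ≤ i) :
    (∀ᶠ t in nhds (B i j),
        DifferentiableAt ℝ (fun t : ℝ => tCholLL D y μ (updEntry B i j t) ν) t) ∧
      HasDerivAt (deriv (fun t : ℝ => tCholLL D y μ (updEntry B i j t) ν))
        (-(if i = j then ((B i i) ^ 2)⁻¹ else 0)
          - (ν + D) * (y j - μ j) ^ 2 *
              ((ν + ∑ k, (B.mulVec (y - μ) k) ^ 2) - 2 * (B.mulVec (y - μ) i) ^ 2) /
            (ν + ∑ k, (B.mulVec (y - μ) k) ^ 2) ^ 2)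
        (B i j) := by
  set z := B *ᵥ (y - μ)
  set q := ∑ k, z k ^ 2
  set r := y j - μ j
  have hquad : ∀ t, 1 + (∑ k, (updEntry B i j t *ᵥ (y - μ)) k ^ 2) / ν
      = (1 + q / ν) + 2 * z i * r / ν * (t - B i j) + r ^ 2 / ν * (t - B i j) ^ 2 := by
    intro t
    rw [updEntry.sum_sq_mulVec, Pi.sub_apply]
    ring
  have hpos : ∀ t, 0 < (1 + q / ν) + 2 * z i * r / ν * (t - B i j) + r ^ 2 / ν * (t - B i j) ^ 2 :=
    fun t => hquad t ▸ by positivity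
  obtain ⟨hlogdet, hlogdet'⟩ := updEntry.hasDerivAt_log_det
    (fun k l hkl => hLT k l (OrderDual.toDual_lt_toDual.1 hkl)) (fun k => (hdiag k).ne') hji
  simp only [tCholLL, hquad]
  have ha : 1 + q / ν ≠ 0 := by positivity
  refine eventually_differentiableAt_and_hasDerivAt_deriv ?_ (hlogdet'.sub
    ((hasDerivAt_logDeriv_quadratic (b := B i j) (c := 2 * z i * r / ν) (d := r ^ 2 / ν) ha).const_mul
      ((ν + D) / 2)) |>.congr_deriv ?_)
  · filter_upwards [hlogdet] with t ht
    exact (ht.const_add _).sub (((hasDerivAt_quadratic t).log (hpos t).ne').const_mul _)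
  · field_simp

/-- Second partial derivative of the multivariate t log-likelihood with respect to the
entry `B_{ij}` (with `j ≤ i`): the map `t ↦ ℓ(μ, B(t), ν)` is twice differentiable at
`t = B i j` and its second derivative equals
`-𝟙_{i=j}/B_{ii}² - (ν + D)·r_j²·((ν + q) - 2·z_i²)/(ν + q)²` with `z = B(y-μ)`,
`r = y - μ` and `q = ‖B(y-μ)‖²`. -/
theorem tChol_deriv2_B (D : ℕ) (hD : 1 ≤ D) (y μ : Fin D → ℝ) (ν : ℝ) (hν : 0 < ν)
    (B : Matrix (Fin D) (Fin D) ℝ)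
    (hLT : ∀ k l : Fin D, k < l → B k l = 0)
    (hdiag : ∀ k, 0 < B k k) (i j : Fin D) (hji : j ≤ i) :
    (∀ᶠ t in nhds (B i j),
        DifferentiableAt ℝ (fun t : ℝ => tCholLL D y μ (updEntry B i j t) ν) t) ∧
      HasDerivAt (deriv (fun t : ℝ => tCholLL D y μ (updEntry B i j t) ν))
        (-(if i = j then ((B i i) ^ 2)⁻¹ else 0)
          - (ν + D) * (y j - μ j) ^ 2 *
              ((ν + ∑ k, (B.mulVec (y - μ) k) ^ 2) - 2 * (B.mulVec (y - μ) i) ^ 2) /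
            (ν + ∑ k, (B.mulVec (y - μ) k) ^ 2) ^ 2)
        (B i j) :=
  tChol_deriv2_B_general D y μ ν hν B hLT hdiag i j hji
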